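/- arXiv:2210.07785 — 2 statements merged into one kernel-verified Lean document; each statement's English description precedes it below -/
import Mathlib

section
/- Let d ≥ 1 and let 0 ≤ ρ ∈ L¹(ℝ^d) with ∫_{ℝ^d} ρ = N ∈ ℕ, N ≥ 2. Then there exist δ > 0 and a symmetric Borel probability measure ℙ on (ℝ^d)^N whose one-body density equals ρ and such that, ℙ-almost everywhere, |x_j − x_k| ≥ δ for all 1 ≤ j < k ≤ N. -/
/-!
Project `ρ` onto the first coordinate and cut `ℝ^d` by hyperplanes `x₁ = t` into `2N`
consecutive slabs of mass `1/2` each, which is possible because `ρ dx` gives no mass to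
hyperplanes. Since every slab has positive mass, the cutting levels are strictly increasing,
so two slabs that are not adjacent lie at distance at least the smallest gap `δ > 0` between
consecutive levels. Placing particle `j` in the even slab `2j` (resp. the odd slab `2j + 1`),
independently with the normalized restriction of `ρ`, keeps any two particles in non-adjacent
slabs; the average of these two product states has one-body density `ρ`, and symmetrizing over
permutations of the particles preserves both the density and the separation.
-/

open MeasureTheory Filter
open scoped ENNReal BigOperators

noncomputable section

/-- `ℝ^d` with its Euclidean structure. -/
abbrev Pt (d : ℕ) := EuclideanSpace ℝ (Fin d)

namespace ClDFT

/-- Positive part of an extended real number, as an element of `ℝ≥0∞`. -/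
def erealPos (a : EReal) : ℝ≥0∞ := if a = ⊤ then ⊤ else ENNReal.ofReal a.toReal

variable {E : Type*} [NormedAddCommGroup E] [MeasureSpace E]
  [SigmaFinite (volume : Measure E)]

/-- The pairwise interaction `∑_{1 ≤ j < k ≤ N} w(x_j - x_k)`, valued in `EReal`. -/
def pairSum (w : E → EReal) (N : ℕ) (x : Fin N → E) : EReal :=
  ∑ p ∈ Finset.univ.filter (fun p : Fin N × Fin N => p.1 < p.2), w (x p.1 - x p.2)

/-- Extended-real integral of an extended-real valued function (positive part minus
negative part, both computed as lower Lebesgue integrals). -/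
def eIntegral {X : Type*} [MeasurableSpace X] (μ : Measure X) (f : X → EReal) : EReal :=
  ((∫⁻ x, erealPos (f x) ∂μ : ℝ≥0∞) : EReal) -
    ((∫⁻ x, erealPos (-(f x)) ∂μ : ℝ≥0∞) : EReal)

/-- Extended-real integral of a real valued function. -/
def realEIntegral {X : Type*} [MeasurableSpace X] (μ : Measure X) (f : X → ℝ) : EReal :=
  ((∫⁻ x, ENNReal.ofReal (f x) ∂μ : ℝ≥0∞) : EReal) -
    ((∫⁻ x, ENNReal.ofReal (-(f x)) ∂μ : ℝ≥0∞) : EReal)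

/-- A measure on `E^N` is symmetric if it is invariant under permutations of
the `N` coordinates. -/
def SymmetricState {N : ℕ} (P : Measure (Fin N → E)) : Prop :=
  ∀ σ : Equiv.Perm (Fin N), Measure.map (fun x => x ∘ σ) P = P

/-- The one-body density of `P` (the sum of the `N` marginals; for a symmetric state
this is `N` times the first marginal) is (absolutely continuous with) density `ρ`. -/
def HasOneBodyDensity {N : ℕ} (P : Measure (Fin N → E)) (ρ : E → ℝ) : Prop :=
  ∀ A : Set E, MeasurableSet A →
    ∑ i : Fin N, P {x | x i ∈ A} = ∫⁻ y in A, ENNReal.ofReal (ρ y)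

/-- Interaction energy `U_N(P) = ∫ ∑_{j<k} w(x_j-x_k) dP`. -/
def interactionEnergy (w : E → EReal) (N : ℕ) (P : Measure (Fin N → E)) : EReal :=
  eIntegral P (pairSum w N)

/-- Minus the entropy, `-S_N(P) = ∫ P log(N! P)`, equal to `⊤` when `P` is not
absolutely continuous with respect to Lebesgue measure. -/
def negEntropy (N : ℕ) (P : Measure (Fin N → E)) : EReal :=
  sInf { e : EReal | ∃ f : (Fin N → E) → ℝ, Measurable f ∧ (∀ x, 0 ≤ f x) ∧
      P = volume.withDensity (fun x => ENNReal.ofReal (f x)) ∧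
      e = realEIntegral volume (fun x => f x * Real.log (N.factorial * f x)) }

/-- Free energy `F_T(P) = U_N(P) - T S_N(P)`. -/
def freeEnergy (w : E → EReal) (T : ℝ) (N : ℕ) (P : Measure (Fin N → E)) : EReal :=
  interactionEnergy w N P + (T : EReal) * negEntropy N P

/-- Canonical free energy at fixed one-body density,
`F_T[ρ] = inf { F_T(P) : ρ_P = ρ }`. -/
def canFreeEnergy (w : E → EReal) (T : ℝ) (N : ℕ) (ρ : E → ℝ) : EReal :=
  sInf { e : EReal | ∃ P : Measure (Fin N → E), IsProbabilityMeasure P ∧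
     SymmetricState P ∧ HasOneBodyDensity P ρ ∧ e = freeEnergy w T N P }

/-- Zero-temperature canonical energy at fixed one-body density,
`F_0[ρ] = inf { U_N(P) : ρ_P = ρ }`. -/
def canEnergy0 (w : E → EReal) (N : ℕ) (ρ : E → ℝ) : EReal :=
  sInf { e : EReal | ∃ P : Measure (Fin N → E), IsProbabilityMeasure P ∧
     SymmetricState P ∧ HasOneBodyDensity P ρ ∧ e = interactionEnergy w N P }

/-- Assumption (A) on the interaction potential `w`, with a finite exponent
`0 ≤ α < ∞` at the origin: `w` is even, lower semicontinuous, stable with constant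
`κ > 0`, and `w(x) ≤ κ(𝟙(|x|<r₀)(r₀/|x|)^α + 1/(1+|x|^s))` with `s > d`.  The core
term is interpreted in `ℝ≥0∞`, so that it equals `+∞` at `x = 0` when `α > 0`. -/
structure AssumptionA (d : ℕ) (w : E → EReal) (κ r₀ α s : ℝ) : Prop where
  even : ∀ x : E, w (-x) = w x
  lsc : LowerSemicontinuous w
  κ_pos : 0 < κ
  stable : ∀ (N : ℕ) (x : Fin N → E), ((-(κ * N) : ℝ) : EReal) ≤ pairSum w N x
  r₀_nonneg : 0 ≤ r₀
  α_nonneg : 0 ≤ α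
  s_gt : (d : ℝ) < s
  upper : ∀ x : E, w x ≤ ((κ : ℝ) : EReal) *
    ((((if ‖x‖ < r₀ then (ENNReal.ofReal r₀ / ENNReal.ofReal ‖x‖) ^ α else 0)
      + ENNReal.ofReal (1 / (1 + ‖x‖ ^ s)) : ℝ≥0∞)) : EReal)

/-- Assumption (A) with a hard core (`α = ∞`) of range `r₀ > 0`: the upper regularity
bound only constrains `w` outside the ball of radius `r₀`, where it reads
`w(x) ≤ κ/(1+|x|^s)`. -/
structure AssumptionAHard (d : ℕ) (w : E → EReal) (κ r₀ s : ℝ) : Prop where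
  even : ∀ x : E, w (-x) = w x
  lsc : LowerSemicontinuous w
  κ_pos : 0 < κ
  stable : ∀ (N : ℕ) (x : Fin N → E), ((-(κ * N) : ℝ) : EReal) ≤ pairSum w N x
  r₀_pos : 0 < r₀
  s_gt : (d : ℝ) < s
  upper : ∀ x : E, r₀ ≤ ‖x‖ → w x ≤ ((κ * (1 / (1 + ‖x‖ ^ s)) : ℝ) : EReal)

/-- A grand-canonical state: a family of symmetric positive measures `P_n` on `E^n`
with total mass one. -/
structure GCState (E : Type*) [NormedAddCommGroup E] [MeasureSpace E] where
  meas : ∀ n : ℕ, Measure (Fin n → E)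
  symm : ∀ n, SymmetricState (meas n)
  total : ∑' n : ℕ, meas n Set.univ = 1

/-- The one-body density of a grand-canonical state is `ρ`. -/
def GCHasDensity (P : GCState E) (ρ : E → ℝ) : Prop :=
  ∀ A : Set E, MeasurableSet A →
    ∑' n : ℕ, ∑ i : Fin n, P.meas n {x | x i ∈ A} = ∫⁻ y in A, ENNReal.ofReal (ρ y)

/-- Grand-canonical interaction energy `U(P) = ∑_n ∫ ∑_{j<k} w(x_j-x_k) dP_n`. -/
def gcInteraction (w : E → EReal) (P : GCState E) : EReal :=
  ((∑' n : ℕ, ∫⁻ x, erealPos (pairSum w n x) ∂P.meas n : ℝ≥0∞) : EReal) -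
    ((∑' n : ℕ, ∫⁻ x, erealPos (-(pairSum w n x)) ∂P.meas n : ℝ≥0∞) : EReal)

/-- Minus the grand-canonical entropy, `-S(P) = ∑_{n≥0} ∫ P_n log(n! P_n)`
(the `n = 0` term giving `P₀ log P₀`), equal to `⊤` if some `P_n` is not absolutely
continuous with respect to Lebesgue measure. -/
def gcNegEntropy (P : GCState E) : EReal :=
  sInf { e : EReal | ∃ f : ∀ n : ℕ, (Fin n → E) → ℝ,
    (∀ n, Measurable (f n)) ∧ (∀ n x, 0 ≤ f n x) ∧
    (∀ n, P.meas n = volume.withDensity (fun x => ENNReal.ofReal (f n x))) ∧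
    e = ((∑' n : ℕ, ∫⁻ x, ENNReal.ofReal (f n x * Real.log (n.factorial * f n x)) : ℝ≥0∞) : EReal)
      - ((∑' n : ℕ, ∫⁻ x, ENNReal.ofReal (-(f n x * Real.log (n.factorial * f n x))) : ℝ≥0∞) : EReal) }

/-- Grand-canonical free energy `G_T(P) = U(P) - T S(P)`. -/
def gcFreeEnergy (w : E → EReal) (T : ℝ) (P : GCState E) : EReal :=
  gcInteraction w P + (T : EReal) * gcNegEntropy P

/-- Grand-canonical free energy at fixed density `G_T[ρ] = inf { G_T(P) : ρ_P = ρ }`. -/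
def gcFreeEnergyAt (w : E → EReal) (T : ℝ) (ρ : E → ℝ) : EReal :=
  sInf { e : EReal | ∃ P : GCState E, GCHasDensity P ρ ∧ e = gcFreeEnergy w T P }

/-- The local radius `R(x)`: the largest `R` with `∫_{B(x,R)} ρ = 1`. -/
def localRadius (ρ : E → ℝ) (x : E) : ℝ :=
  sSup { r : ℝ | ∫ y in Metric.ball x r, ρ y = 1 }

/-- `R_ρ = min_{x} R(x)`. -/
def minRadius (ρ : E → ℝ) : ℝ := sInf (Set.range (localRadius ρ))

end ClDFT

open ClDFT


open MeasureTheory ProbabilityTheory Filter Set Topology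

lemma Finset.sum_range_two_mul {M : Type*} [AddCommMonoid M] (f : ℕ → M) (n : ℕ) :
    ∑ k ∈ Finset.range (2 * n), f k = ∑ k ∈ Finset.range n, (f (2 * k) + f (2 * k + 1)) := by
  induction n with
  | zero => simp
  | succ n ih => rw [Nat.mul_succ, Finset.sum_range_succ, Finset.sum_range_succ,
      Finset.sum_range_succ, ih, add_assoc]

lemma PiLp.lipschitzWith_apply {ι : Type*} [Fintype ι] (p : ℝ≥0∞) [Fact (1 ≤ p)]
    {β : ι → Type*} [∀ i, PseudoMetricSpace (β i)] (i : ι) :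
    LipschitzWith 1 fun x : PiLp p β => x i :=
  LipschitzWith.of_dist_le_mul fun x y => by simpa using PiLp.dist_apply_le x y i

lemma EuclideanSpace.volume_setOf_apply_eq {ι : Type*} [Fintype ι] (i : ι) (t : ℝ) :
    volume {x : EuclideanSpace ℝ ι | x i = t} = 0 :=
  show volume (WithLp.ofLp ⁻¹' {y : ι → ℝ | y i = t}) = 0 from
  (PiLp.volume_preserving_ofLp ι).quasiMeasurePreserving.preimage_null
    (by rw [volume_pi]; exact Measure.pi_hyperplane (fun _ => (volume : Measure ℝ)) i t)

namespace ProbabilityTheory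

lemma continuous_cdf (p : Measure ℝ) [IsProbabilityMeasure p] [NullSingletonClass p] :
    Continuous (cdf p) := by
  refine continuous_iff_continuousAt.2 fun t => ?_
  rw [(cdf p).mono.continuousAt_iff_leftLim_eq_rightLim, StieltjesFunction.rightLim_eq]
  have h := (cdf p).measure_singleton t
  rw [measure_cdf, measure_singleton, eq_comm, ENNReal.ofReal_eq_zero, sub_nonpos] at h
  exact le_antisymm ((cdf p).mono.leftLim_le le_rfl) h

lemma exists_cdf_eq (p : Measure ℝ) [IsProbabilityMeasure p] [NullSingletonClass p] {c : ℝ}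
    (hc : c ∈ Ioo 0 1) : ∃ t, cdf p t = c :=
  mem_range_of_exists_le_of_exists_ge (continuous_cdf p)
    ((tendsto_cdf_atBot p).eventually (eventually_le_nhds hc.1)).exists
    ((tendsto_cdf_atTop p).eventually (eventually_ge_nhds hc.2)).exists

lemma exists_measure_Iic_eq (ν : Measure ℝ) [IsFiniteMeasure ν] [NullSingletonClass ν]
    {a : ℝ≥0∞} (h0 : 0 < a) (h1 : a < ν univ) : ∃ t, ν (Iic t) = a := by
  have hν : ν univ ≠ 0 := (h0.trans h1).ne'
  let p := (ν univ)⁻¹ • ν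
  have : IsProbabilityMeasure p :=
    ⟨by simp [p, ENNReal.inv_mul_cancel hν (measure_ne_top _ _)]⟩
  have : NullSingletonClass p := ⟨fun t => by simp [p]⟩
  have ha : a / ν univ ≠ ⊤ := ENNReal.div_ne_top (h1.trans_le le_top).ne hν
  obtain ⟨t, ht⟩ := exists_cdf_eq p (c := (a / ν univ).toReal)
    ⟨ENNReal.toReal_pos (ENNReal.div_pos h0.ne' (measure_ne_top _ _)).ne' ha, by
      rw [← ENNReal.toReal_one]
      exact ENNReal.toReal_strict_mono ENNReal.one_ne_top
        ((ENNReal.div_lt_iff (Or.inl hν) (Or.inl (measure_ne_top _ _))).2 (by simpa using h1))⟩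
  refine ⟨t, ?_⟩
  have h := ofReal_cdf p t
  rw [ht, ENNReal.ofReal_toReal ha, Measure.smul_apply, smul_eq_mul, ENNReal.div_eq_inv_mul] at h
  exact (ENNReal.mul_right_inj (ENNReal.inv_ne_zero.2 (measure_ne_top _ _))
    (ENNReal.inv_ne_top.2 hν)).1 h.symm

lemma ae_pi_cond_mem {X ι : Type*} [MeasurableSpace X] [Fintype ι] (μ : Measure X)
    {T : ι → Set X} (hT : ∀ i, MeasurableSet (T i)) :
    ∀ᵐ x ∂Measure.pi (fun i => μ[|T i]), ∀ i, x i ∈ T i :=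
  ae_all_iff.2 fun i => Measure.tendsto_eval_ae_ae.eventually (ae_cond_mem (hT i))

end ProbabilityTheory

namespace MeasureTheory

variable {X : Type*} [MeasurableSpace X]

lemma exists_measure_le_eq (μ : Measure X) [IsFiniteMeasure μ] {g : X → ℝ} (hg : Measurable g)
    (hatom : ∀ t, μ (g ⁻¹' {t}) = 0) {a : ℝ≥0∞} (ha : a ≤ μ univ) :
    ∃ t : EReal, μ {x | (g x : EReal) ≤ t} = a := by
  rcases ha.eq_or_lt with rfl | ha
  · exact ⟨⊤, by simp⟩
  rcases (zero_le (a := a)).eq_or_lt with rfl | h0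
  · exact ⟨⊥, by simp⟩
  have : NullSingletonClass (μ.map g) :=
    ⟨fun t => by rw [Measure.map_apply hg (measurableSet_singleton t)]; exact hatom t⟩
  obtain ⟨t, ht⟩ := exists_measure_Iic_eq (μ.map g) h0
    (by rwa [Measure.map_apply hg MeasurableSet.univ, preimage_univ])
  refine ⟨t, ?_⟩
  rw [Measure.map_apply hg measurableSet_Iic] at ht
  simp only [EReal.coe_le_coe_iff]
  exact ht

lemma Measure.sum_restrict_sdiff_add_restrict (μ : Measure X) {C : ℕ → Set X}
    (hC : ∀ k, MeasurableSet (C k)) {n : ℕ} (hmono : ∀ k < n, C k ⊆ C (k + 1)) :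
    ∑ k ∈ Finset.range n, μ.restrict (C (k + 1) \ C k) + μ.restrict (C 0) = μ.restrict (C n) := by
  induction n with
  | zero => simp
  | succ n ih =>
    rw [Finset.sum_range_succ, add_right_comm, ih fun k hk => hmono k (by omega),
      ← Measure.restrict_union disjoint_sdiff_right ((hC _).diff (hC _)),
      union_sdiff_cancel (hmono n n.lt_succ_self)]

end MeasureTheory

namespace ClDFT

section Symmetrize

variable {X : Type*} [MeasurableSpace X] {N : ℕ}

def symmetrize (P : Measure (Fin N → X)) : Measure (Fin N → X) :=
  (N.factorial : ℝ≥0∞)⁻¹ • ∑ σ : Equiv.Perm (Fin N), P.map (fun x => x ∘ σ)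

def oneBodyMeasure (P : Measure (Fin N → X)) : Measure X :=
  ∑ i, P.map (fun x => x i)

lemma measurableEmbedding_comp_perm (σ : Equiv.Perm (Fin N)) :
    MeasurableEmbedding (fun x : Fin N → X => x ∘ σ) :=
  (MeasurableEquiv.arrowCongr' σ.symm (MeasurableEquiv.refl X)).measurableEmbedding

lemma symmetrize_apply (P : Measure (Fin N → X)) (S : Set (Fin N → X)) :
    symmetrize P S = (N.factorial : ℝ≥0∞)⁻¹ * ∑ σ : Equiv.Perm (Fin N), P ((· ∘ σ) ⁻¹' S) := by
  simp only [symmetrize, Measure.smul_apply, Measure.finsetSum_apply, smul_eq_mul,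
    (measurableEmbedding_comp_perm _).map_apply]

lemma inv_factorial_mul_sum_perm_const (a : ℝ≥0∞) :
    (N.factorial : ℝ≥0∞)⁻¹ * ∑ _σ : Equiv.Perm (Fin N), a = a := by
  rw [Finset.sum_const, Finset.card_univ, Fintype.card_perm, Fintype.card_fin, nsmul_eq_mul,
    ENNReal.inv_mul_cancel_left (by positivity) (ENNReal.natCast_ne_top _)]

lemma symmetricState_symmetrize {Y : Type*} [MeasureSpace Y] (P : Measure (Fin N → Y)) :
    SymmetricState (symmetrize P) := by
  intro σ
  ext S
  rw [(measurableEmbedding_comp_perm σ).map_apply, symmetrize_apply, symmetrize_apply]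
  congr 1
  exact Fintype.sum_equiv (Equiv.mulRight σ) _ _ fun τ => rfl

instance isProbabilityMeasure_symmetrize (P : Measure (Fin N → X)) [IsProbabilityMeasure P] :
    IsProbabilityMeasure (symmetrize P) :=
  ⟨by simp only [symmetrize_apply, preimage_univ, measure_univ, inv_factorial_mul_sum_perm_const]⟩

lemma ae_symmetrize {P : Measure (Fin N → X)} {Q : (Fin N → X) → Prop}
    (hQ : ∀ σ : Equiv.Perm (Fin N), ∀ x, Q x → Q (x ∘ σ)) (h : ∀ᵐ x ∂P, Q x) :
    ∀ᵐ x ∂symmetrize P, Q x :=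
  Measure.ae_smul_measure (ae_finsetSum_measure_iff.2 fun σ _ =>
    (measurableEmbedding_comp_perm σ).ae_map_iff.2 (h.mono (hQ σ))) _

lemma oneBodyMeasure_apply (P : Measure (Fin N → X)) {A : Set X} (hA : MeasurableSet A) :
    oneBodyMeasure P A = ∑ i, P {x | x i ∈ A} := by
  rw [oneBodyMeasure, Measure.finsetSum_apply]
  exact Finset.sum_congr rfl fun i _ => Measure.map_apply (measurable_pi_apply i) hA

lemma oneBodyMeasure_symmetrize (P : Measure (Fin N → X)) :
    oneBodyMeasure (symmetrize P) = oneBodyMeasure P := by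
  ext A hA
  simp only [oneBodyMeasure_apply _ hA, symmetrize_apply, ← Finset.mul_sum]
  rw [Finset.sum_comm, ← inv_factorial_mul_sum_perm_const (∑ i, P {x | x i ∈ A})]
  congr 1
  exact Finset.sum_congr rfl fun σ _ => Fintype.sum_equiv σ _ _ fun i => rfl

lemma oneBodyMeasure_add (P Q : Measure (Fin N → X)) :
    oneBodyMeasure (P + Q) = oneBodyMeasure P + oneBodyMeasure Q := by
  simp only [oneBodyMeasure, Measure.map_add _ _ (measurable_pi_apply _), Finset.sum_add_distrib]

lemma oneBodyMeasure_smul (c : ℝ≥0∞) (P : Measure (Fin N → X)) :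
    oneBodyMeasure (c • P) = c • oneBodyMeasure P := by
  simp only [oneBodyMeasure, Measure.map_smul, Finset.smul_sum]

lemma oneBodyMeasure_pi (m : Fin N → Measure X) [∀ i, IsProbabilityMeasure (m i)] :
    oneBodyMeasure (Measure.pi m) = ∑ i, m i :=
  Finset.sum_congr rfl fun i _ => (measurePreserving_eval m i).map_eq

lemma hasOneBodyDensity_of_oneBodyMeasure_eq {Y : Type*} [MeasureSpace Y]
    {P : Measure (Fin N → Y)} {ρ : Y → ℝ}
    (h : oneBodyMeasure P = volume.withDensity fun y => ENNReal.ofReal (ρ y)) :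
    HasOneBodyDensity P ρ := fun A hA => by
  rw [← oneBodyMeasure_apply P hA, h, withDensity_apply _ hA]

end Symmetrize

section Slabs

variable {X : Type*} [PseudoMetricSpace X]

lemma eventually_le_dist_of_lt {π : X → ℝ} (hπ : LipschitzWith 1 π) {a b : EReal}
    (hab : a < b) :
    ∀ᶠ δ in 𝓝[>] (0 : ℝ), ∀ x y, (π x : EReal) ≤ a → b < π y → δ ≤ dist x y := by
  induction a using EReal.rec with
  | bot => exact .of_forall fun _ x _ hx => absurd hx (by simp)
  | top => exact absurd hab (by simp)
  | coe a =>
    induction b using EReal.rec with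
    | bot => exact absurd hab (by simp)
    | top => exact .of_forall fun _ _ y _ hy => absurd hy (by simp)
    | coe b =>
      filter_upwards [nhdsWithin_le_nhds
        (eventually_le_nhds (sub_pos.2 (EReal.coe_lt_coe_iff.1 hab)))] with δ hδ x y hx hy
      have hxy := hπ.dist_le_mul y x
      rw [Real.dist_eq, NNReal.coe_one, one_mul, dist_comm] at hxy
      have := le_abs_self (π y - π x)
      have := EReal.coe_le_coe_iff.1 hx
      have := EReal.coe_lt_coe_iff.1 hy
      linarith

variable [MeasurableSpace X]

lemma exists_separated_slabs (μ : Measure X) [IsFiniteMeasure μ] {π : X → ℝ}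
    (hπm : Measurable π) (hπ : LipschitzWith 1 π) (hatom : ∀ t, μ (π ⁻¹' {t}) = 0)
    {m : ℕ} {c : ℝ≥0∞} (hc : c ≠ 0) (hmass : μ univ = m * c) :
    ∃ (S : ℕ → Set X) (δ : ℝ), 0 < δ ∧ (∀ k, MeasurableSet (S k)) ∧ (∀ k < m, μ (S k) = c) ∧
      ∑ k ∈ Finset.range m, μ.restrict (S k) = μ ∧
      ∀ i j, i + 1 < j → j < m → ∀ x ∈ S i, ∀ y ∈ S j, δ ≤ dist x y := by
  choose t ht using fun k : ℕ => exists_measure_le_eq μ hπm hatom (a := min k m * c)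
    (hmass ▸ by gcongr; exact_mod_cast min_le_right k m)
  -- `t 0` and `t m` may be `⊥` and `⊤`: the two outer slabs are unbounded.
  set C : ℕ → Set X := fun k => {x | (π x : EReal) ≤ t k}
  have hCm : ∀ k, MeasurableSet (C k) := fun k =>
    measurableSet_le hπm.coe_real_ereal measurable_const
  have hCμ : ∀ k ≤ m, μ (C k) = k * c := fun k hk => by
    rw [ht, min_eq_left (by exact_mod_cast hk)]
  have hc_top : 0 < m → c ≠ ⊤ := fun hm => ne_top_of_le_ne_top (measure_ne_top μ univ)
    (hmass ▸ le_mul_of_one_le_left' (by exact_mod_cast hm))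
  have ht_lt : ∀ k l, k < l → l ≤ m → t k < t l := by
    intro k l hkl hl
    by_contra! h
    have hle : μ (C l) ≤ μ (C k) := measure_mono fun x (hx : _ ≤ _) => hx.trans h
    rw [hCμ l hl, hCμ k (hkl.le.trans hl)] at hle
    exact hle.not_gt ((ENNReal.mul_lt_mul_iff_left hc (hc_top (by omega))).2
      (by exact_mod_cast hkl))
  have hCmono : ∀ k < m, C k ⊆ C (k + 1) := fun k hk x (hx : _ ≤ _) =>
    hx.trans (ht_lt k (k + 1) k.lt_succ_self hk).le
  obtain ⟨δ, hδ, hδpos⟩ := ((eventually_all_finset (Finset.range m)).2 fun k hk =>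
    eventually_le_dist_of_lt hπ (ht_lt k (k + 1) k.lt_succ_self (Finset.mem_range.1 hk))).and
    self_mem_nhdsWithin |>.exists
  refine ⟨fun k => C (k + 1) \ C k, δ, hδpos, fun k => (hCm _).diff (hCm _), fun k hk => ?_, ?_,
    ?_⟩
  · rw [measure_sdiff (hCmono k hk) (hCm k).nullMeasurableSet (measure_ne_top _ _), hCμ _ hk,
      hCμ k hk.le, Nat.cast_succ, add_one_mul]
    exact ENNReal.add_sub_cancel_left (ENNReal.mul_ne_top (ENNReal.natCast_ne_top k)
      (hc_top (by omega)))
  · have h := Measure.sum_restrict_sdiff_add_restrict μ hCm hCmono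
    rwa [Measure.restrict_eq_zero.2 (by simpa using hCμ 0 (Nat.zero_le m)), add_zero,
      Measure.restrict_eq_self_of_ae_mem] at h
    rw [ae_iff, ← compl_def, measure_compl (hCm m) (measure_ne_top _ _), hCμ m le_rfl, hmass,
      tsub_self]
  · intro i j hij hj x hx y hy
    refine hδ (i + 1) (Finset.mem_range.2 (by omega)) x y hx.1 ?_
    calc t (i + 1 + 1) ≤ t j := by
          rcases (show i + 1 + 1 ≤ j by omega).eq_or_lt with h | h
          · rw [h]
          · exact (ht_lt _ _ h hj.le).le
      _ < π y := not_le.1 hy.2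

end Slabs

section TwoFamilies

variable {X : Type*} [PseudoMetricSpace X] {N : ℕ} {S : ℕ → Set X} {δ : ℝ}

lemma pairwise_le_dist_of_forall_mem
    (hsep : ∀ i j, i + 1 < j → j < 2 * N → ∀ x ∈ S i, ∀ y ∈ S j, δ ≤ dist x y)
    {b : ℕ} (hb : b < 2) {x : Fin N → X} (hx : ∀ j : Fin N, x j ∈ S (2 * j + b)) :
    Pairwise fun j k => δ ≤ dist (x j) (x k) := by
  intro j k hjk
  rcases hjk.lt_or_gt with h | h
  · exact hsep _ _ (by omega) (by omega) _ (hx j) _ (hx k)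
  · exact dist_comm (x j) _ ▸ hsep _ _ (by omega) (by omega) _ (hx k) _ (hx j)

variable [MeasurableSpace X]

lemma exists_pairwise_le_dist_of_slabs (μ : Measure X) (hS : ∀ k, MeasurableSet (S k))
    (hSμ : ∀ k < 2 * N, μ (S k) = 2⁻¹)
    (hsum : ∑ k ∈ Finset.range (2 * N), μ.restrict (S k) = μ)
    (hsep : ∀ i j, i + 1 < j → j < 2 * N → ∀ x ∈ S i, ∀ y ∈ S j, δ ≤ dist x y) :
    ∃ P : Measure (Fin N → X), IsProbabilityMeasure P ∧ oneBodyMeasure P = μ ∧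
      ∀ᵐ x ∂P, Pairwise fun j k => δ ≤ dist (x j) (x k) := by
  have hcond : ∀ (j : Fin N) b, b < 2 → IsProbabilityMeasure μ[|S (2 * j + b)] := fun j b hb =>
    cond_isProbabilityMeasure_of_finite (by rw [hSμ _ (by omega)]; simp)
      (by rw [hSμ _ (by omega)]; simp)
  have := fun j => hcond j 0 (by omega)
  have := fun j => hcond j 1 (by omega)
  have hrestrict : ∀ k < 2 * N, (2⁻¹ : ℝ≥0∞) • μ[|S k] = μ.restrict (S k) := fun k hk => by
    rw [ProbabilityTheory.cond, smul_smul, hSμ k hk, inv_inv,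
      ENNReal.inv_mul_cancel two_ne_zero ENNReal.ofNat_ne_top, one_smul]
  let P₀ := fun b => Measure.pi fun j : Fin N => μ[|S (2 * j + b)]
  refine ⟨(2⁻¹ : ℝ≥0∞) • P₀ 0 + (2⁻¹ : ℝ≥0∞) • P₀ 1, ⟨?_⟩, ?_, ?_⟩
  · simp [P₀, ENNReal.inv_two_add_inv_two]
  · rw [oneBodyMeasure_add, oneBodyMeasure_smul, oneBodyMeasure_smul, oneBodyMeasure_pi,
      oneBodyMeasure_pi, Finset.smul_sum, Finset.smul_sum, ← Finset.sum_add_distrib]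
    conv_rhs => rw [← hsum, Finset.sum_range_two_mul, ← Fin.sum_univ_eq_sum_range
      (fun j => μ.restrict (S (2 * j)) + μ.restrict (S (2 * j + 1)))]
    exact Finset.sum_congr rfl fun j _ => by
      rw [hrestrict _ (by omega), hrestrict _ (by omega)]; rfl
  · refine ae_add_measure_iff.2 ⟨Measure.ae_smul_measure ?_ _, Measure.ae_smul_measure ?_ _⟩
    · exact (ae_pi_cond_mem μ fun j => hS _).mono fun x hx =>
        pairwise_le_dist_of_forall_mem hsep (b := 0) (by omega) hx
    · exact (ae_pi_cond_mem μ fun j => hS _).mono fun x hx =>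
        pairwise_le_dist_of_forall_mem hsep (b := 1) (by omega) hx

end TwoFamilies

end ClDFT

theorem statement0_general (d N : ℕ) (hd : 1 ≤ d)
    (ρ : Pt d → ℝ) (hρ : ∀ x, 0 ≤ ρ x) (hint : Integrable ρ)
    (hmass : ∫ x, ρ x = N) :
    ∃ (δ : ℝ) (P : Measure (Fin N → Pt d)), 0 < δ ∧ IsProbabilityMeasure P ∧
      SymmetricState P ∧ HasOneBodyDensity P ρ ∧
      ∀ᵐ x ∂P, ∀ j k : Fin N, j ≠ k → δ ≤ dist (x j) (x k) := by
  let μ := volume.withDensity fun x => ENNReal.ofReal (ρ x)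
  have : IsFiniteMeasure μ := isFiniteMeasure_withDensity_ofReal hint.2
  have hμ : μ univ = (2 * N : ℕ) * 2⁻¹ := by
    rw [withDensity_apply _ MeasurableSet.univ, setLIntegral_univ,
      ← ofReal_integral_eq_lintegral_ofReal hint (ae_of_all _ hρ), hmass, ENNReal.ofReal_natCast]
    push_cast
    rw [mul_right_comm, ENNReal.mul_inv_cancel two_ne_zero ENNReal.ofNat_ne_top, one_mul]
  have hπ := PiLp.lipschitzWith_apply 2 (β := fun _ : Fin d => ℝ) ⟨0, hd⟩
  obtain ⟨S, δ, hδ, hS, hSμ, hsum, hsep⟩ := exists_separated_slabs μ hπ.continuous.measurable hπ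
    (fun t => withDensity_absolutelyContinuous _ _ (EuclideanSpace.volume_setOf_apply_eq _ t))
    (by simp) hμ
  obtain ⟨P, hP, hPμ, hPsep⟩ := exists_pairwise_le_dist_of_slabs μ hS hSμ hsum hsep
  exact ⟨δ, symmetrize P, hδ, inferInstance, symmetricState_symmetrize P,
    hasOneBodyDensity_of_oneBodyMeasure_eq ((oneBodyMeasure_symmetrize P).trans hPμ),
    ae_symmetrize (fun σ x hx j k hjk => hx (σ j) (σ k) (σ.injective.ne hjk)) hPsep⟩

/-- Any nonnegative `ρ ∈ L¹(ℝ^d)` with `∫ρ = N ∈ ℕ`, `N ≥ 2`, is the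
one-body density of a symmetric `N`-particle probability measure whose particles stay
at distance at least some `δ > 0` from each other, almost surely. -/
theorem statement0 (d N : ℕ) (hd : 1 ≤ d) (hN : 2 ≤ N)
    (ρ : Pt d → ℝ) (hρ : ∀ x, 0 ≤ ρ x) (hint : Integrable ρ)
    (hmass : ∫ x, ρ x = N) :
    ∃ (δ : ℝ) (P : Measure (Fin N → Pt d)), 0 < δ ∧ IsProbabilityMeasure P ∧
      SymmetricState P ∧ HasOneBodyDensity P ρ ∧
      ∀ᵐ x ∂P, ∀ j k : Fin N, j ≠ k → δ ≤ dist (x j) (x k) :=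
  statement0_general d N hd ρ hρ hint hmass
end
end

section
/- Let d ≥ 1 and α > d. Let 𝒞 = (−1/2, 1/2)^d be the unit cube and let (Q_j) be any finite or countable collection of pairwise disjoint axis-parallel open cubes in ℝ^d such that |Q_j| ≥ 1 and dist(𝒞, Q_j) ≥ 1/2 for every j. Then ∑_j dist(𝒞, Q_j)^{−α} ≤ 3^α 2^{7d} d² / (|𝕊^{d−1}| (α − d)), where |𝕊^{d−1}| is the surface measure of the unit sphere in ℝ^d. -/
open MeasureTheory Filter
open scoped ENNReal BigOperators

noncomputable section

open ClDFT

/-- The open axis-parallel cube `x + l·(-1/2,1/2)^d`. -/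
def cube (d : ℕ) (x : Pt d) (l : ℝ) : Set (Pt d) :=
  {y | ∀ i, y i - x i ∈ Set.Ioo (-(l / 2)) (l / 2)}

/-- Distance between two sets. -/
noncomputable def setDist {X : Type*} [PseudoMetricSpace X] (A B : Set X) : ℝ :=
  sInf (Set.image2 dist A B)

/-- The surface measure `|𝕊^{d-1}| = d·|B_1|` of the unit sphere of `ℝ^d`. -/
noncomputable def sphereArea (d : ℕ) : ℝ :=
  d * (volume (Metric.ball (0 : Pt d) 1)).toReal

/-!
Each cube `Q_j` of side `≥ 1` contains a unit cube `C_j` all of whose points satisfy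
`|z| ≤ dist(𝒞, Q_j) + 2√d`; since `dist(𝒞, Q_j) ≥ 1/2` this gives
`dist(𝒞, Q_j)^(-α) ≤ (5√d)^α max(5√d/2, |z|)^(-α)` on `C_j`. The `C_j` are disjoint and have
volume one, so the sum is bounded by the integral of this radial function, which the layer-cake
formula evaluates to `(5√d)^d 2^(α-d) α/(α-d) |B_1|`. The constant follows from
`|B_1|² ≤ (2πe/d)^d`, i.e. from `Γ(x+1) ≥ (x/e)^x`.
-/

open Real Set MeasureTheory Metric Module

theorem Real.rpow_div_exp_le_Gamma_add_one {x : ℝ} (hx : 0 ≤ x) :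
    (x / exp 1) ^ x ≤ Gamma (x + 1) := by
  have hint : IntegrableOn (fun t => exp (-t) * t ^ x) (Ioi 0) := by
    simpa using Real.GammaIntegral_convergent (s := x + 1) (by linarith)
  calc (x / exp 1) ^ x = ∫ t in Ioi x, exp (-t) * x ^ x := by
        rw [integral_mul_const, integral_exp_neg_Ioi, div_rpow hx (exp_pos 1).le,
          exp_one_rpow, exp_neg]
        ring
    _ ≤ ∫ t in Ioi x, exp (-t) * t ^ x := by
        refine setIntegral_mono_on ?_ (hint.mono_set (Ioi_subset_Ioi hx)) measurableSet_Ioi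
          fun t ht => ?_
        · exact (integrableOn_exp_neg_Ioi x).mul_const _
        · exact mul_le_mul_of_nonneg_left (rpow_le_rpow hx (le_of_lt ht) hx) (exp_pos _).le
    _ ≤ ∫ t in Ioi 0, exp (-t) * t ^ x :=
        setIntegral_mono_set hint
          (ae_restrict_of_forall_mem measurableSet_Ioi fun t (ht : 0 < t) => by positivity)
          (Ioi_subset_Ioi hx).eventuallyLE
    _ = Gamma (x + 1) := by rw [Gamma_eq_integral (by linarith), add_sub_cancel_right]

theorem le_three_mul_three_halves_rpow {x : ℝ} (hx : 0 ≤ x) : x ≤ 3 * (3 / 2 : ℝ) ^ x := by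
  have hlog : 1 / 3 ≤ log (3 / 2) := by
    have := one_sub_inv_le_log_of_pos (x := 3 / 2) (by norm_num)
    norm_num at this ⊢; linarith
  calc x ≤ 3 * (log (3 / 2) * x + 1) := by nlinarith
    _ ≤ 3 * exp (log (3 / 2) * x) := by gcongr; exact add_one_le_exp _
    _ = 3 * (3 / 2 : ℝ) ^ x := by rw [rpow_def_of_pos (by norm_num)]

theorem two_rpow_mul_add_le {x c : ℝ} (hx : 0 ≤ x) (hc : 0 ≤ c) :
    (2 : ℝ) ^ x * (x + c) ≤ 3 ^ x * (3 + c) := by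
  calc (2 : ℝ) ^ x * (x + c) = 2 ^ x * x + 2 ^ x * c := mul_add _ _ _
    _ ≤ 2 ^ x * (3 * (3 / 2) ^ x) + 3 ^ x * c :=
        add_le_add (mul_le_mul_of_nonneg_left (le_three_mul_three_halves_rpow hx) (by positivity))
          (mul_le_mul_of_nonneg_right (rpow_le_rpow (by norm_num) (by norm_num) hx) hc)
    _ = 3 ^ x * (3 + c) := by
        have h : (2 : ℝ) ^ x * (3 / 2) ^ x = 3 ^ x := by
          rw [← mul_rpow (by norm_num) (by norm_num)]; norm_num
        linear_combination 3 * h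

theorem InnerProductSpace.measureReal_unitBall_sq_le {E : Type*} [NormedAddCommGroup E]
    [InnerProductSpace ℝ E] [FiniteDimensional ℝ E] [MeasurableSpace E] [BorelSpace E]
    [Nontrivial E] :
    volume.real (ball (0 : E) 1) ^ 2 ≤ (2 * π * exp 1 / finrank ℝ E) ^ finrank ℝ E := by
  set n := finrank ℝ E
  have hn : (0 : ℝ) < n := by exact_mod_cast finrank_pos
  have hG : ((n / 2 / exp 1) ^ ((n : ℝ) / 2)) ^ 2 ≤ Gamma (n / 2 + 1) ^ 2 :=
    pow_le_pow_left₀ (by positivity) (rpow_div_exp_le_Gamma_add_one (by positivity)) 2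
  have hsq : ((n / 2 / exp 1) ^ ((n : ℝ) / 2)) ^ 2 = (n / (2 * exp 1)) ^ n := by
    rw [← rpow_natCast, ← rpow_mul (by positivity), div_div]; norm_num
  rw [hsq] at hG
  rw [measureReal_def, InnerProductSpace.volume_ball, ENNReal.ofReal_one, one_pow, one_mul,
    ENNReal.toReal_ofReal (by positivity), div_pow, ← pow_mul, mul_comm, pow_mul, sq_sqrt pi_pos.le]
  calc π ^ n / Gamma (n / 2 + 1) ^ 2 ≤ π ^ n / (n / (2 * exp 1)) ^ n :=
        div_le_div_of_nonneg_left (by positivity) (by positivity) hG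
    _ = (2 * π * exp 1 / n) ^ n := by rw [← div_pow]; congr 1; field_simp

theorem lintegral_Ioo_rpow {T p : ℝ} (hT : 0 < T) (hp : -1 < p) :
    ∫⁻ t in Ioo 0 T, ENNReal.ofReal (t ^ p) = ENNReal.ofReal (T ^ (p + 1) / (p + 1)) := by
  have hint : IntegrableOn (fun t : ℝ => t ^ p) (Ioc 0 T) := by
    rw [← intervalIntegrable_iff_integrableOn_Ioc_of_le hT.le]
    exact intervalIntegral.intervalIntegrable_rpow' hp
  rw [← ofReal_integral_eq_lintegral_ofReal (hint.mono_set Ioo_subset_Ioc_self)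
    (ae_restrict_of_forall_mem measurableSet_Ioo fun t ht => rpow_nonneg ht.1.le p),
    ← integral_Ioc_eq_integral_Ioo, ← intervalIntegral.integral_of_le hT.le,
    integral_rpow (Or.inl hp), zero_rpow (by linarith), sub_zero]

section LayerCake

variable {E : Type*} [NormedAddCommGroup E] [NormedSpace ℝ E] [FiniteDimensional ℝ E]
  [MeasurableSpace E] [BorelSpace E] (μ : Measure E) [μ.IsAddHaarMeasure] {ρ α : ℝ}

theorem measure_setOf_lt_max_norm_rpow_neg (hρ : 0 < ρ) (hα : 0 < α) {t : ℝ} (ht : 0 < t) :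
    μ {z : E | t < max ρ ‖z‖ ^ (-α)} = (Iio (ρ ^ (-α))).indicator
      (fun t => ENNReal.ofReal (t ^ (-(finrank ℝ E / α))) * μ (ball 0 1)) t := by
  have hr : 0 < t ^ (-α)⁻¹ := rpow_pos_of_pos ht _
  have hiff : ∀ m > 0, t < m ^ (-α) ↔ m < t ^ (-α)⁻¹ := fun m hm =>
    (lt_rpow_inv_iff_of_neg hm ht (neg_neg_of_pos hα)).symm
  have hset : {z : E | t < max ρ ‖z‖ ^ (-α)} = {z | ρ < t ^ (-α)⁻¹ ∧ ‖z‖ < t ^ (-α)⁻¹} := by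
    ext z
    simp only [mem_ofPred_eq, hiff _ (lt_max_of_lt_left hρ), max_lt_iff]
  by_cases h : t < ρ ^ (-α)
  · have hball : {z : E | t < max ρ ‖z‖ ^ (-α)} = ball 0 (t ^ (-α)⁻¹) := by
      rw [hset]; ext z
      simp only [mem_ofPred_eq, mem_ball_zero_iff, (hiff ρ hρ).1 h, true_and]
    rw [indicator_of_mem (mem_Iio.2 h), hball, μ.addHaar_ball_of_pos _ hr, ← rpow_natCast,
      ← rpow_mul ht.le]
    congr 3
    field_simp
  · have hempty : {z : E | t < max ρ ‖z‖ ^ (-α)} = ∅ := by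
      rw [hset]; ext z
      simp only [mem_ofPred_eq, (hiff ρ hρ).not.1 h, false_and, mem_empty_iff_false]
    rw [indicator_of_notMem (by simpa using h), hempty, measure_empty]

theorem lintegral_max_norm_rpow_neg (hρ : 0 < ρ) (hα : (finrank ℝ E : ℝ) < α) :
    ∫⁻ z, ENNReal.ofReal (max ρ ‖z‖ ^ (-α)) ∂μ =
      ENNReal.ofReal (ρ ^ ((finrank ℝ E : ℝ) - α) * (α / (α - finrank ℝ E))) * μ (ball 0 1) := by
  have hα0 : 0 < α := (Nat.cast_nonneg _).trans_lt hα
  have hp : -1 < -(finrank ℝ E / α) := by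
    rw [neg_lt_neg_iff, div_lt_one hα0]; exact hα
  rw [lintegral_eq_lintegral_meas_lt μ (ae_of_all _ fun z => by positivity) (by fun_prop),
    setLIntegral_congr_fun measurableSet_Ioi
      fun t (ht : 0 < t) => measure_setOf_lt_max_norm_rpow_neg μ hρ hα0 ht,
    lintegral_indicator measurableSet_Iio, Measure.restrict_restrict measurableSet_Iio,
    Iio_inter_Ioi, lintegral_mul_const _ (by fun_prop),
    lintegral_Ioo_rpow (rpow_pos_of_pos hρ _) hp, ← rpow_mul hρ.le]
  congr 3
  field_simp
  ring_nf

end LayerCake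

theorem mem_cube_iff {d : ℕ} {x y : Pt d} {l : ℝ} : y ∈ cube d x l ↔ ∀ i, |y i - x i| < l / 2 := by
  simp only [cube, mem_ofPred_eq, mem_Ioo, abs_lt]

theorem mem_cube_self {d : ℕ} (x : Pt d) {l : ℝ} (hl : 0 < l) : x ∈ cube d x l :=
  mem_cube_iff.2 fun i => by simpa using hl

theorem cube_eq_preimage_pi (d : ℕ) (x : Pt d) (l : ℝ) :
    cube d x l = (MeasurableEquiv.toLp 2 (Fin d → ℝ)).symm ⁻¹'
      univ.pi fun i => Ioo (x i - l / 2) (x i + l / 2) := by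
  ext y
  simp only [cube, mem_ofPred_eq, mem_preimage, mem_univ_pi, mem_Ioo,
    MeasurableEquiv.coe_toLp_symm]
  constructor <;> intro h i <;> constructor <;> linarith [(h i).1, (h i).2]

theorem measurableSet_cube (d : ℕ) (x : Pt d) (l : ℝ) : MeasurableSet (cube d x l) := by
  rw [cube_eq_preimage_pi]
  exact (MeasurableSet.univ_pi fun _ => measurableSet_Ioo).preimage (MeasurableEquiv.measurable _)

theorem volume_cube (d : ℕ) (x : Pt d) (l : ℝ) : volume (cube d x l) = ENNReal.ofReal l ^ d := by
  rw [cube_eq_preimage_pi, (EuclideanSpace.volume_preserving_symm_measurableEquiv_toLp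
    (Fin d)).measure_preimage (MeasurableSet.univ_pi fun _ => measurableSet_Ioo).nullMeasurableSet,
    volume_pi_pi]
  simp [Real.volume_Ioo]

theorem EuclideanSpace.norm_le_sqrt_card_mul {ι : Type*} [Fintype ι] (v : EuclideanSpace ℝ ι)
    {a : ℝ} (ha : 0 ≤ a) (h : ∀ i, |v i| ≤ a) : ‖v‖ ≤ √(Fintype.card ι) * a := by
  have hsum : ∑ i, ‖v i‖ ^ 2 ≤ Fintype.card ι * a ^ 2 := calc
    ∑ i, ‖v i‖ ^ 2 ≤ ∑ _i : ι, a ^ 2 :=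
      Finset.sum_le_sum fun i _ => pow_le_pow_left₀ (norm_nonneg _) (h i) 2
    _ = Fintype.card ι * a ^ 2 := by simp
  rw [EuclideanSpace.norm_eq, ← sqrt_sq ha, ← sqrt_mul (Nat.cast_nonneg _)]
  exact sqrt_le_sqrt hsum

theorem norm_sub_le_of_mem_cube {d : ℕ} {x z : Pt d} {l : ℝ} (hl : 0 ≤ l) (hz : z ∈ cube d x l) :
    ‖z - x‖ ≤ √d * (l / 2) := by
  simpa using EuclideanSpace.norm_le_sqrt_card_mul (z - x) (by positivity)
    fun i => (mem_cube_iff.1 hz i).le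

theorem abs_clamp_sub_center_le {m r q : ℝ} (hr : 0 ≤ r) :
    |max (m - r) (min q (m + r)) - m| ≤ r := by
  rw [abs_le]
  constructor <;> linarith [le_max_left (m - r) (min q (m + r)),
    max_le (by linarith : m - r ≤ m + r) (min_le_right q (m + r))]

theorem abs_clamp_sub_le {m r q s : ℝ} (hs : 0 ≤ s) (hq : |q - m| ≤ r + s) :
    |max (m - r) (min q (m + r)) - q| ≤ s := by
  obtain ⟨hq₁, hq₂⟩ := abs_le.1 hq
  rw [abs_le]
  rcases le_total q (m + r) with h | h
  · rw [min_eq_left h]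
    rcases le_total (m - r) q with h' | h'
    · rw [max_eq_right h', sub_self]; exact ⟨by linarith, hs⟩
    · rw [max_eq_left h']; constructor <;> linarith
  · rw [min_eq_right h]
    rcases le_total (m - r) (m + r) with h' | h'
    · rw [max_eq_right h']; constructor <;> linarith
    · rw [max_eq_left h']; constructor <;> linarith

theorem exists_unit_subcube_norm_le {d : ℕ} (hd : 1 ≤ d) (y : Pt d) {l : ℝ} (hl : 1 ≤ l) :
    ∃ c, cube d c 1 ⊆ cube d y l ∧
      ∀ z ∈ cube d c 1, ‖z‖ ≤ setDist (cube d 0 1) (cube d y l) + 2 * √d := by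
  have hsd : 0 < √d := sqrt_pos.2 (by exact_mod_cast hd)
  have hne : (image2 dist (cube d 0 1) (cube d y l)).Nonempty :=
    ⟨_, mem_image2_of_mem (mem_cube_self 0 one_pos) (mem_cube_self y (by linarith))⟩
  obtain ⟨_, ⟨x₀, hx₀, q, hq, rfl⟩, hdist⟩ :=
    exists_lt_of_csInf_lt hne (lt_add_of_pos_right _ (half_pos hsd))
  -- the centre of the unit subcube closest to `q`: `q` clamped to the cube of admissible centres
  -- `q` clamped, coordinatewise, to the cube of centres of unit subcubes of `cube d y l`
  set c : Pt d := WithLp.toLp 2 fun i => max (y i - (l - 1) / 2) (min (q i) (y i + (l - 1) / 2))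
  have hcy : ∀ i, |c i - y i| ≤ (l - 1) / 2 := fun i => abs_clamp_sub_center_le (by linarith)
  have hcq : ∀ i, |c i - q i| ≤ 1 / 2 := fun i =>
    abs_clamp_sub_le (by norm_num) (by linarith [mem_cube_iff.1 hq i])
  refine ⟨c, fun z hz => mem_cube_iff.2 fun i => ?_, fun z hz => ?_⟩
  · calc |z i - y i| ≤ |z i - c i| + |c i - y i| := abs_sub_le _ _ _
      _ < 1 / 2 + (l - 1) / 2 := add_lt_add_of_lt_of_le (mem_cube_iff.1 hz i) (hcy i)
      _ = l / 2 := by ring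
  · have hzq : ‖z - q‖ ≤ √d := by
      simpa using EuclideanSpace.norm_le_sqrt_card_mul (z - q) zero_le_one fun i =>
        calc |z i - q i| ≤ |z i - c i| + |c i - q i| := abs_sub_le _ _ _
          _ ≤ 1 / 2 + 1 / 2 := add_le_add (mem_cube_iff.1 hz i).le (hcq i)
          _ = 1 := by norm_num
    have hx₀ : ‖x₀‖ ≤ √d * (1 / 2) := by simpa using norm_sub_le_of_mem_cube zero_le_one hx₀
    calc ‖z‖ = ‖(z - q) + (q - x₀) + x₀‖ := by abel_nf
      _ ≤ ‖z - q‖ + ‖q - x₀‖ + ‖x₀‖ := norm_add₃_le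
      _ ≤ √d + (setDist (cube d 0 1) (cube d y l) + √d / 2) + √d * (1 / 2) := by
        gcongr
        rw [← dist_eq_norm, dist_comm]; exact hdist.le
      _ = setDist (cube d 0 1) (cube d y l) + 2 * √d := by ring

theorem tsum_le_lintegral_of_pairwise_disjoint {X ι : Type*} [MeasurableSpace X] [Countable ι]
    {μ : Measure X} {A : ι → Set X} (hA : ∀ i, MeasurableSet (A i))
    (hdisj : Pairwise fun i j => Disjoint (A i) (A j)) (hμ : ∀ i, 1 ≤ μ (A i)) {a : ι → ENNReal}
    {g : X → ENNReal} (hg : ∀ i, ∀ x ∈ A i, a i ≤ g x) : ∑' i, a i ≤ ∫⁻ x, g x ∂μ :=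
  calc ∑' i, a i ≤ ∑' i, ∫⁻ x in A i, g x ∂μ := ENNReal.tsum_le_tsum fun i =>
        calc a i ≤ a i * μ (A i) := le_mul_of_one_le_right' (hμ i)
          _ = ∫⁻ _ in A i, a i ∂μ := (setLIntegral_const _ _).symm
          _ ≤ ∫⁻ x in A i, g x ∂μ := setLIntegral_mono' (hA i) (hg i)
    _ = ∫⁻ x in ⋃ i, A i, g x ∂μ := (lintegral_iUnion hA hdisj _).symm
    _ ≤ ∫⁻ x, g x ∂μ := setLIntegral_le_lintegral _ _

theorem rpow_neg_le_mul_max_rpow_neg {s t r α : ℝ} (hs : 1 ≤ s) (ht : 1 / 2 ≤ t)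
    (hr : r ≤ t + 2 * s) (hα : 0 ≤ α) :
    t ^ (-α) ≤ (5 * s) ^ α * max (5 * s / 2) r ^ (-α) := by
  have ht0 : 0 < t := by linarith
  have hmax : max (5 * s / 2) r ≤ 5 * s * t := max_le (by nlinarith) (by nlinarith)
  calc t ^ (-α) = (5 * s) ^ α * (5 * s * t) ^ (-α) := by
        rw [mul_rpow (by positivity) ht0.le, ← mul_assoc, ← rpow_add (by positivity),
          add_neg_cancel, rpow_zero, one_mul]
    _ ≤ (5 * s) ^ α * max (5 * s / 2) r ^ (-α) :=
        mul_le_mul_of_nonneg_left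
          (rpow_le_rpow_of_nonpos (by positivity) hmax (neg_nonpos.2 hα)) (by positivity)

theorem sq_mul_five_sqrt_pow_le {d : ℕ} (hd : 1 ≤ d) {ω : ℝ}
    (hω2 : ω ^ 2 ≤ (2 * π * exp 1 / d) ^ d) : ω ^ 2 * (5 * √d) ^ d ≤ 86 ^ d := by
  have hd1 : (1 : ℝ) ≤ d := by exact_mod_cast hd
  have hsd : √d ≤ d := by
    rw [sqrt_le_left (by positivity)]; nlinarith
  have hbase : 2 * π * exp 1 / d * (5 * √d) ≤ 86 := by
    have hpe : 10 * π * exp 1 ≤ 86 := by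
      nlinarith [pi_lt_d2, exp_one_lt_d9, pi_pos, exp_pos 1]
    calc 2 * π * exp 1 / d * (5 * √d) = 10 * π * exp 1 * (√d / d) := by ring
      _ ≤ 10 * π * exp 1 * 1 := by
        gcongr; rw [div_le_one (by positivity)]; exact hsd
      _ ≤ 86 := by linarith
  calc ω ^ 2 * (5 * √d) ^ d ≤ (2 * π * exp 1 / d) ^ d * (5 * √d) ^ d := by gcongr
    _ = (2 * π * exp 1 / d * (5 * √d)) ^ d := (mul_pow _ _ _).symm
    _ ≤ 86 ^ d := pow_le_pow_left₀ (by positivity) hbase d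

theorem five_sqrt_rpow_mul_le_div {d : ℕ} (hd : 1 ≤ d) {α ω : ℝ} (hα : (d : ℝ) < α) (hω : 0 < ω)
    (hω2 : ω ^ 2 ≤ (2 * π * exp 1 / d) ^ d) :
    (5 * √d) ^ α * ((5 * √d / 2) ^ ((d : ℝ) - α) * (α / (α - d)) * ω) ≤
      3 ^ α * 2 ^ (7 * d) * d ^ 2 / (d * ω * (α - d)) := by
  have hd1 : (1 : ℝ) ≤ d := by exact_mod_cast hd
  have hαd : 0 < α - d := by linarith
  set K := 5 * √d
  have hK : 0 < K := by positivity
  have hKα : K ^ α * (K / 2) ^ ((d : ℝ) - α) = K ^ d * 2 ^ (α - d) := by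
    rw [div_rpow hK.le zero_le_two, mul_div_assoc', ← rpow_add hK, add_sub_cancel, rpow_natCast,
      div_eq_mul_inv, ← rpow_neg zero_le_two, neg_sub]
  have hpow : (2 : ℝ) ^ (α - d) * α ≤ 3 ^ (α - d) * (4 ^ d * d) := by
    calc (2 : ℝ) ^ (α - d) * α = 2 ^ (α - d) * ((α - d) + d) := by ring_nf
      _ ≤ 3 ^ (α - d) * (3 + d) := two_rpow_mul_add_le hαd.le (Nat.cast_nonneg d)
      _ ≤ 3 ^ (α - d) * (4 ^ d * d) := by
        gcongr
        nlinarith [one_le_pow₀ (M₀ := ℝ) (by norm_num : (1 : ℝ) ≤ 4) (n := d),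
          le_self_pow₀ (by norm_num : (1 : ℝ) ≤ 4) (by omega : d ≠ 0)]
  have h3 : (3 : ℝ) ^ α = 3 ^ (α - d) * 3 ^ d := by
    rw [← rpow_natCast, ← rpow_add (by norm_num), sub_add_cancel]
  have h384 : (86 : ℝ) ^ d * 4 ^ d ≤ 3 ^ d * 2 ^ (7 * d) := by
    rw [← mul_pow, pow_mul, ← mul_pow]; exact pow_le_pow_left₀ (by norm_num) (by norm_num) d
  rw [le_div_iff₀ (by positivity)]
  calc K ^ α * ((K / 2) ^ ((d : ℝ) - α) * (α / (α - d)) * ω) * (d * ω * (α - d))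
      = ω ^ 2 * (K ^ α * (K / 2) ^ ((d : ℝ) - α)) * α * d := by field_simp
    _ = ω ^ 2 * K ^ d * (2 ^ (α - d) * α) * d := by rw [hKα]; ring
    _ ≤ 86 ^ d * (3 ^ (α - d) * (4 ^ d * d)) * d :=
        mul_le_mul_of_nonneg_right (mul_le_mul (sq_mul_five_sqrt_pow_le hd hω2) hpow
          (mul_nonneg (by positivity) (by linarith)) (by positivity)) (by positivity)
    _ = 3 ^ (α - d) * (86 ^ d * 4 ^ d) * d ^ 2 := by ring
    _ ≤ 3 ^ (α - d) * (3 ^ d * 2 ^ (7 * d)) * d ^ 2 := by gcongr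
    _ = 3 ^ α * 2 ^ (7 * d) * d ^ 2 := by rw [h3]; ring

/-- **summing inverse distances to disjoint cubes, `α > d`.** -/
theorem statement12 (d : ℕ) (hd : 1 ≤ d) (α : ℝ) (hα : (d : ℝ) < α)
    (ι : Type) [Countable ι] (y : ι → Pt d) (lam : ι → ℝ)
    (hlam : ∀ i, 0 < lam i) (hvol : ∀ i, 1 ≤ lam i ^ d)
    (hdisj : Pairwise fun i j => Disjoint (cube d (y i) (lam i)) (cube d (y j) (lam j)))
    (hdist : ∀ i, 1 / 2 ≤ setDist (cube d 0 1) (cube d (y i) (lam i))) :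
    ∑' i, ENNReal.ofReal (setDist (cube d 0 1) (cube d (y i) (lam i)) ^ (-α))
      ≤ ENNReal.ofReal
          ((3 : ℝ) ^ α * 2 ^ (7 * d) * d ^ 2 / (sphereArea d * (α - d))) := by
  have hα0 : 0 < α := (Nat.cast_nonneg d).trans_lt hα
  have hlam1 : ∀ i, 1 ≤ lam i := fun i =>
    (one_le_pow_iff_of_nonneg (hlam i).le (by omega)).1 (hvol i)
  choose c hcsub hcnorm using fun i => exists_unit_subcube_norm_le hd (y i) (hlam1 i)
  have : Nonempty (Fin d) := ⟨⟨0, hd⟩⟩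
  have hω2 := InnerProductSpace.measureReal_unitBall_sq_le (E := Pt d)
  rw [finrank_euclideanSpace_fin] at hω2
  set K := 5 * √(d : ℝ)
  have hKα : 0 ≤ K ^ α := by positivity
  calc ∑' i, ENNReal.ofReal (setDist (cube d 0 1) (cube d (y i) (lam i)) ^ (-α))
      ≤ ∫⁻ z, ENNReal.ofReal (K ^ α * max (K / 2) ‖z‖ ^ (-α)) :=
        tsum_le_lintegral_of_pairwise_disjoint (fun i => measurableSet_cube d (c i) 1)
          (fun i j hij => (hdisj hij).mono (hcsub i) (hcsub j)) (fun i => by simp [volume_cube])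
          fun i z hz => ENNReal.ofReal_le_ofReal <| rpow_neg_le_mul_max_rpow_neg
            (one_le_sqrt.2 (by exact_mod_cast hd)) (hdist i) (hcnorm i z hz) hα0.le
    _ = ENNReal.ofReal (K ^ α * ((K / 2) ^ ((d : ℝ) - α) * (α / (α - d)) *
          volume.real (ball (0 : Pt d) 1))) := by
        simp_rw [ENNReal.ofReal_mul hKα]
        rw [lintegral_const_mul _ (by fun_prop), lintegral_max_norm_rpow_neg volume (by positivity)
          (by simpa using hα), finrank_euclideanSpace_fin, ENNReal.ofReal_mul
          (mul_nonneg (by positivity) (div_nonneg hα0.le (sub_nonneg.2 hα.le))),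
          ofReal_measureReal]
    _ ≤ _ := ENNReal.ofReal_le_ofReal <| five_sqrt_rpow_mul_le_div hd hα
          (ENNReal.toReal_pos (measure_ball_pos volume 0 one_pos).ne' measure_ball_lt_top.ne) hω2
end
end
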